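/- arXiv:1511.06949 — 8 statements merged into one kernel-verified Lean document; each statement's English description precedes it below -/
import Mathlib

section
/- Let p be holomorphic on the unit disk D with p(0) = 1 and power series p(z) = 1 + ∑_{n≥1} b_n z^n, and let 0 ≤ α < 1. If Re p(z) ≥ α for all z ∈ D, then |b_2 - b_1²/(2(1-α))| ≤ 2(1-α) - |b_1|²/(2(1-α)). -/
/-!
For `0 < r < 1` put `g θ = Re p(r e^{iθ}) - α ≥ 0` and `u θ = e^{-iθ}`. By the Cauchy integral
formula the weighted moments `mₖ = ∫₀^{2π} g uᵏ` are `m₀ = 2π(1 - α)`, `m₁ = π r b₁`,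
`m₂ = π r² b₂`. For any weight `g ≥ 0` and unimodular `u`, `|∫ g (u - w)²| ≤ ∫ g |u - w|²`, which
for `w = m₁ / m₀` reads `|m₂ - m₁² / m₀| ≤ m₀ - |m₁|² / m₀`. This is the claimed inequality with
`b₁, b₂` replaced by `r b₁, r² b₂`; let `r → 1`.
-/

open Complex Metric MeasureTheory
open scoped Real ComplexConjugate Nat

theorem norm_integral_mul_sq_sub_le {X : Type*} [MeasurableSpace X] {μ : Measure X} {g : X → ℝ}
    {u : X → ℂ} (hg : ∀ x, 0 ≤ g x) (hgi : Integrable g μ)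
    (hu : ∀ x, ‖u x‖ = 1) (hum : AEStronglyMeasurable u μ) :
    ‖∫ x, (g x : ℂ) * u x ^ 2 ∂μ - (∫ x, (g x : ℂ) * u x ∂μ) ^ 2 / (∫ x, g x ∂μ : ℝ)‖ ≤
      ∫ x, g x ∂μ - ‖∫ x, (g x : ℂ) * u x ∂μ‖ ^ 2 / ∫ x, g x ∂μ := by
  set m₀ := ∫ x, g x ∂μ
  set m₁ := ∫ x, (g x : ℂ) * u x ∂μ with hm₁
  set m₂ := ∫ x, (g x : ℂ) * u x ^ 2 ∂μ with hm₂
  set w : ℂ := m₁ / m₀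
  have hbdd {v : X → ℂ} (hv : AEStronglyMeasurable v μ) (hv1 : ∀ x, ‖v x‖ ≤ 1) :
      Integrable (fun x => (g x : ℂ) * v x) μ :=
    hgi.ofReal.mul_bdd hv (.of_forall hv1)
  have hi₀ : Integrable (fun x => (g x : ℂ)) μ := hgi.ofReal
  have hi₁ : Integrable (fun x => (g x : ℂ) * u x) μ := hbdd hum fun x => (hu x).le
  have hi₂ : Integrable (fun x => (g x : ℂ) * u x ^ 2) μ :=
    hbdd (hum.pow 2) fun x => by simp [hu x]
  have hi₃ : Integrable (fun x => (g x : ℂ) * conj (u x)) μ :=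
    hbdd (continuous_conj.comp_aestronglyMeasurable hum) fun x => by simp [hu x]
  have hm₀ : ∫ x, (g x : ℂ) ∂μ = m₀ := integral_ofReal
  have hm₃ : ∫ x, (g x : ℂ) * conj (u x) ∂μ = conj m₁ := by
    simp only [m₁, ← integral_conj, map_mul, conj_ofReal]
  have h_sq : ∫ x, (g x : ℂ) * (u x - w) ^ 2 ∂μ = m₂ - m₁ ^ 2 / m₀ := by
    have : ∀ x, (g x : ℂ) * (u x - w) ^ 2 =
        (g x : ℂ) * u x ^ 2 - 2 * w * ((g x : ℂ) * u x) + w ^ 2 * (g x : ℂ) := fun x => by ring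
    simp only [this]
    rw [integral_add (hi₂.sub' (hi₁.const_mul _)) (hi₀.const_mul _),
      integral_sub hi₂ (hi₁.const_mul _), integral_const_mul, integral_const_mul, hm₀, ← hm₁, ← hm₂]
    rcases eq_or_ne (m₀ : ℂ) 0 with h | h
    · simp [w, h]
    · simp only [w]
      field_simp
      ring
  have h_normSq : ∫ x, g x * ‖u x - w‖ ^ 2 ∂μ = m₀ - ‖m₁‖ ^ 2 / m₀ := by
    apply ofReal_injective
    have : ∀ x, ((g x * ‖u x - w‖ ^ 2 : ℝ) : ℂ) = (g x : ℂ) - conj w * ((g x : ℂ) * u x) -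
        w * ((g x : ℂ) * conj (u x)) + w * conj w * (g x : ℂ) := by
      intro x
      have h1 : u x * conj (u x) = 1 := by simp [mul_conj', hu x]
      push_cast
      rw [← mul_conj', map_sub]
      linear_combination (g x : ℂ) * h1
    rw [← integral_complex_ofReal]
    simp only [this]
    rw [integral_add ((hi₀.sub' (hi₁.const_mul _)).sub' (hi₃.const_mul _)) (hi₀.const_mul _),
      integral_sub (hi₀.sub' (hi₁.const_mul _)) (hi₃.const_mul _),
      integral_sub hi₀ (hi₁.const_mul _),
      integral_const_mul, integral_const_mul, integral_const_mul, hm₀, hm₃, ← hm₁]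
    push_cast
    rw [← mul_conj']
    rcases eq_or_ne (m₀ : ℂ) 0 with h | h
    · simp [w, h]
    · simp only [w, map_div₀, conj_ofReal]
      field_simp
      ring
  calc ‖m₂ - m₁ ^ 2 / m₀‖ = ‖∫ x, (g x : ℂ) * (u x - w) ^ 2 ∂μ‖ := by rw [h_sq]
    _ ≤ ∫ x, ‖(g x : ℂ) * (u x - w) ^ 2‖ ∂μ := norm_integral_le_integral_norm _
    _ = ∫ x, g x * ‖u x - w‖ ^ 2 ∂μ := by
      congr 1 with x
      rw [norm_mul, norm_pow, norm_real, Real.norm_of_nonneg (hg x)]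
    _ = m₀ - ‖m₁‖ ^ 2 / m₀ := h_normSq

section CircleMoments

variable {f : ℂ → ℂ} {c : ℂ} {R : ℝ}

theorem DifferentiableOn.integral_exp_neg_pow_mul_circleMap (hR : 0 < R)
    (hf : DifferentiableOn ℂ f (closedBall c R)) (n : ℕ) :
    ∫ θ in 0..2 * π, cexp (-(θ * I)) ^ n * f (circleMap c R θ) =
      2 * π * R ^ n * (iteratedDeriv n f c / n !) := by
  have h := hf.circleIntegral_one_div_sub_center_pow_smul hR n
  have hR' : (R : ℂ) ≠ 0 := ofReal_ne_zero.2 hR.ne'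
  have hint (θ : ℝ) : circleMap 0 R θ * I *
      (1 / (circleMap c R θ - c) ^ (n + 1) * f (circleMap c R θ)) =
        I / R ^ n * (cexp (-(θ * I)) ^ n * f (circleMap c R θ)) := by
    have := exp_ne_zero (θ * I)
    rw [circleMap_sub_center, circleMap_zero, exp_neg, inv_pow]
    field_simp
    ring
  simp only [circleIntegral, deriv_circleMap, smul_eq_mul, hint,
    intervalIntegral.integral_const_mul] at h
  apply mul_left_cancel₀ (div_ne_zero I_ne_zero (pow_ne_zero n hR'))
  rw [h]
  field_simp

theorem DifferentiableOn.integral_exp_pow_succ_mul_circleMap (hR : 0 < R)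
    (hf : DifferentiableOn ℂ f (closedBall c R)) (n : ℕ) :
    ∫ θ in 0..2 * π, cexp (θ * I) ^ (n + 1) * f (circleMap c R θ) = 0 := by
  have h : ∮ z in C(c, R), (z - c) ^ n * f z = 0 :=
    ((((differentiableOn_id.sub_const c).pow n).mul hf).mono
      closure_ball_subset_closedBall).diffContOnCl.circleIntegral_eq_zero hR.le
  have hint (θ : ℝ) : circleMap 0 R θ * I * ((circleMap c R θ - c) ^ n * f (circleMap c R θ)) =
      I * R ^ (n + 1) * (cexp (θ * I) ^ (n + 1) * f (circleMap c R θ)) := by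
    rw [circleMap_sub_center, circleMap_zero]
    ring
  simp only [circleIntegral, deriv_circleMap, smul_eq_mul, hint,
    intervalIntegral.integral_const_mul] at h
  exact (mul_eq_zero.1 h).resolve_left (by simp [I_ne_zero, hR.ne'])

theorem DifferentiableOn.continuous_comp_circleMap (hR : 0 ≤ R)
    (hf : DifferentiableOn ℂ f (closedBall c R)) : Continuous fun θ => f (circleMap c R θ) :=
  hf.continuousOn.comp_continuous (continuous_circleMap c R) (circleMap_mem_closedBall c hR)

theorem DifferentiableOn.integral_re_circleMap (hR : 0 < R)
    (hf : DifferentiableOn ℂ f (closedBall c R)) :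
    ∫ θ in 0..2 * π, (f (circleMap c R θ)).re = 2 * π * (f c).re := by
  have h := hf.integral_exp_neg_pow_mul_circleMap hR 0
  simp only [pow_zero, one_mul, iteratedDeriv_zero, Nat.factorial_zero, Nat.cast_one, div_one,
    mul_one] at h
  have := intervalIntegral.intervalIntegral_re
    ((hf.continuous_comp_circleMap hR.le).intervalIntegrable (μ := volume) 0 (2 * π))
  simp only [RCLike.re_to_complex] at this
  rw [this, h]
  simp

theorem DifferentiableOn.integral_re_mul_exp_neg_pow_circleMap (hR : 0 < R)
    (hf : DifferentiableOn ℂ f (closedBall c R)) {n : ℕ} (hn : n ≠ 0) :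
    ∫ θ in 0..2 * π, ((f (circleMap c R θ)).re : ℂ) * cexp (-(θ * I)) ^ n =
      π * R ^ n * (iteratedDeriv n f c / n !) := by
  obtain ⟨m, rfl⟩ := Nat.exists_eq_add_one_of_ne_zero hn
  have hcont := hf.continuous_comp_circleMap hR.le
  have hsplit (θ : ℝ) : ((f (circleMap c R θ)).re : ℂ) * cexp (-(θ * I)) ^ (m + 1) =
      1 / 2 * (cexp (-(θ * I)) ^ (m + 1) * f (circleMap c R θ)) +
        1 / 2 * conj (cexp (θ * I) ^ (m + 1) * f (circleMap c R θ)) := by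
    rw [re_eq_add_conj, map_mul, map_pow, ← exp_conj, map_mul, conj_ofReal, conj_I]
    ring_nf
  simp only [hsplit]
  rw [intervalIntegral.integral_add, intervalIntegral.integral_const_mul,
    intervalIntegral.integral_const_mul, intervalIntegral.intervalIntegral_conj,
    hf.integral_exp_neg_pow_mul_circleMap hR, hf.integral_exp_pow_succ_mul_circleMap hR]
  · simp only [map_zero]
    ring
  all_goals refine Continuous.intervalIntegrable (continuous_const.mul ?_) _ _
  · exact (by fun_prop : Continuous fun θ : ℝ => cexp (-(θ * I)) ^ (m + 1)).mul hcont
  · exact continuous_conj.comp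
      ((by fun_prop : Continuous fun θ : ℝ => cexp (θ * I) ^ (m + 1)).mul hcont)

theorem DifferentiableOn.sq_mul_norm_sub_le_of_re_nonneg (hR : 0 < R)
    (hf : DifferentiableOn ℂ f (closedBall c R)) (hre : ∀ z ∈ sphere c R, 0 ≤ (f z).re) :
    R ^ 2 * ‖iteratedDeriv 2 f c / 2 - iteratedDeriv 1 f c ^ 2 / (2 * (f c).re)‖ ≤
      2 * (f c).re - R ^ 2 * ‖iteratedDeriv 1 f c‖ ^ 2 / (2 * (f c).re) := by
  have h := norm_integral_mul_sq_sub_le (μ := volume.restrict (Set.Ioc 0 (2 * π)))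
    (g := fun θ => (f (circleMap c R θ)).re) (u := fun θ => cexp (-(θ * I)))
    (fun θ => hre _ (circleMap_mem_sphere c hR.le θ))
    (continuous_re.comp (hf.continuous_comp_circleMap hR.le)).integrableOn_Ioc
    (fun θ => by simp [norm_exp]) (by fun_prop : Continuous _).aestronglyMeasurable
  have h₁ := hf.integral_re_mul_exp_neg_pow_circleMap hR one_ne_zero
  have h₂ := hf.integral_re_mul_exp_neg_pow_circleMap hR two_ne_zero
  norm_num [Nat.factorial] at h₁ h₂
  simp only [← intervalIntegral.integral_of_le Real.two_pi_pos.le,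
    hf.integral_re_circleMap hR, h₁, h₂] at h
  rw [iteratedDeriv_one]
  set x := (f c).re
  set A := iteratedDeriv 2 f c / 2
  set B := _root_.deriv f c
  have e₁ : (π : ℂ) * R ^ 2 * A - (π * R * B) ^ 2 / ((2 * π * x : ℝ) : ℂ) =
      π * (R ^ 2 * (A - B ^ 2 / (2 * x))) := by
    push_cast
    rcases eq_or_ne (x : ℂ) 0 with hx | hx
    · simp [hx, mul_assoc]
    · field_simp
  have e₂ : 2 * π * x - ‖(π : ℂ) * R * B‖ ^ 2 / (2 * π * x) =
      π * (2 * x - R ^ 2 * ‖B‖ ^ 2 / (2 * x)) := by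
    simp only [norm_mul, norm_real, Real.norm_of_nonneg Real.pi_pos.le, Real.norm_of_nonneg hR.le]
    rcases eq_or_ne x 0 with hx | hx
    · simp [hx]
    · field_simp
  rw [e₁, e₂, norm_mul, norm_mul, norm_real, Real.norm_of_nonneg Real.pi_pos.le, norm_pow,
    norm_real, Real.norm_of_nonneg hR.le] at h
  exact le_of_mul_le_mul_left h Real.pi_pos

end CircleMoments

theorem stmt_0_general (α : ℝ)
    (p : ℂ → ℂ) (hp : DifferentiableOn ℂ p (ball (0:ℂ) 1))
    (h0 : p 0 = 1)
    (b : ℕ → ℂ) (hb : ∀ n, b n = iteratedDeriv n p 0 / (Nat.factorial n))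
    (hre : ∀ z ∈ ball (0:ℂ) 1, α ≤ (p z).re) :
    ‖b 2 - b 1 ^ 2 / (2 * (1 - (α:ℂ)))‖ ≤
      2 * (1 - α) - ‖b 1‖ ^ 2 / (2 * (1 - α)) := by
  set q : ℂ → ℂ := fun z => -(α : ℂ) + p z
  have hq : (q 0).re = 1 - α := by simp [q, h0]; ring
  have hq₁ : iteratedDeriv 1 q 0 = b 1 := by simp [q, hb]
  have hq₂ : iteratedDeriv 2 q 0 / 2 = b 2 := by simp [q, hb, iteratedDeriv_const_add two_pos]
  have hr : ∀ r ∈ Set.Ioo (0 : ℝ) 1, r ^ 2 * ‖b 2 - b 1 ^ 2 / (2 * (1 - (α:ℂ)))‖ ≤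
      2 * (1 - α) - r ^ 2 * ‖b 1‖ ^ 2 / (2 * (1 - α)) := by
    rintro r ⟨hr₀, hr₁⟩
    have hqr : DifferentiableOn ℂ q (closedBall 0 r) :=
      (hp.const_add _).mono (closedBall_subset_ball hr₁)
    have := hqr.sq_mul_norm_sub_le_of_re_nonneg hr₀
      fun z hz => by simpa [q] using hre z (sphere_subset_ball hr₁ hz)
    rw [hq, hq₁, hq₂] at this
    push_cast at this
    exact this
  have hclosed : IsClosed {r : ℝ | r ^ 2 * ‖b 2 - b 1 ^ 2 / (2 * (1 - (α:ℂ)))‖ ≤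
      2 * (1 - α) - r ^ 2 * ‖b 1‖ ^ 2 / (2 * (1 - α))} :=
    isClosed_le (by fun_prop) (by fun_prop)
  simpa using hclosed.closure_subset_iff.2 hr
    (by simp [closure_Ioo] : (1 : ℝ) ∈ closure (Set.Ioo 0 1))

theorem stmt_0 (α : ℝ) (hα0 : 0 ≤ α) (hα1 : α < 1)
    (p : ℂ → ℂ) (hp : DifferentiableOn ℂ p (ball (0:ℂ) 1))
    (h0 : p 0 = 1)
    (b : ℕ → ℂ) (hb : ∀ n, b n = iteratedDeriv n p 0 / (Nat.factorial n))
    (hre : ∀ z ∈ ball (0:ℂ) 1, α ≤ (p z).re) :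
    ‖b 2 - b 1 ^ 2 / (2 * (1 - (α:ℂ)))‖ ≤
      2 * (1 - α) - ‖b 1‖ ^ 2 / (2 * (1 - α)) :=
  stmt_0_general α p hp h0 b hb hre
end

section
/- Let p be holomorphic on the unit disk D with p(0) = 1 and power series p(z) = 1 + ∑_{n≥1} b_n z^n, and let 0 ≤ α < 1. If Re p(z) ≥ α for all z ∈ D, then |b_3 - b_1 b_2/(1-α) + b_1³/(4(1-α)²)| ≤ 2(1-α) - |b_1|²/(2(1-α)). -/
/-!
With `β = 2 (1 - α)`, the function `f = (p - 1) / (p + 1 - 2α)` maps the disk into the closed disk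
and vanishes at `0`, so by Schwarz's lemma `f = z g` with `g` a Schur function; equivalently
`p = 1 + z ((1 - 2α) g + g p)`. Comparing Taylor coefficients gives `b₁ = β g₀`,
`b₂ = β (g₁ + g₀²)` and `b₃ = β (g₂ + 2 g₀ g₁ + g₀³)`, so the left-hand side is `β ‖g₂‖` and the
claim reduces to `‖g₂‖ ≤ 1 - ‖g₀‖²`. One step of the Schur algorithm writes
`g = g₀ + z k (1 - conj g₀ g)` with `k` again a Schur function, whence
`g₂ = (1 - ‖g₀‖²) (k₁ - conj g₀ k₀²)`, and Schwarz–Pick `‖k₁‖ ≤ 1 - ‖k₀‖²` finishes the proof.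
-/

open Complex Metric Filter Set Topology
open scoped Nat ComplexConjugate

section TaylorCoeff

variable {𝕜 : Type*} [NontriviallyNormedField 𝕜] {f g : 𝕜 → 𝕜} {n : ℕ}

noncomputable def taylorCoeff (f : 𝕜 → 𝕜) (n : ℕ) : 𝕜 := iteratedDeriv n f 0 / n !

@[simp]
lemma taylorCoeff_zero (f : 𝕜 → 𝕜) : taylorCoeff f 0 = f 0 := by
  simp [taylorCoeff]

lemma taylorCoeff_congr (h : f =ᶠ[𝓝 0] g) (n : ℕ) : taylorCoeff f n = taylorCoeff g n := by
  rw [taylorCoeff, taylorCoeff, h.iteratedDeriv_eq]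

lemma taylorCoeff_const_mul (c : 𝕜) (f : 𝕜 → 𝕜) (n : ℕ) :
    taylorCoeff (fun z => c * f z) n = c * taylorCoeff f n := by
  rw [taylorCoeff, taylorCoeff, iteratedDeriv_const_mul_field, mul_div_assoc]

lemma taylorCoeff_const_sub (hn : 0 < n) (c : 𝕜) (f : 𝕜 → 𝕜) :
    taylorCoeff (fun z => c - f z) n = -taylorCoeff f n := by
  rw [taylorCoeff, taylorCoeff, iteratedDeriv_const_sub hn, iteratedDeriv_neg, neg_div]

variable [CompleteSpace 𝕜]

lemma taylorCoeff_add (hf : AnalyticAt 𝕜 f 0) (hg : AnalyticAt 𝕜 g 0) :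
    taylorCoeff (fun z => f z + g z) n = taylorCoeff f n + taylorCoeff g n := by
  rw [taylorCoeff, taylorCoeff, taylorCoeff, iteratedDeriv_fun_add hf.contDiffAt hg.contDiffAt,
    add_div]

variable [CharZero 𝕜]

lemma taylorCoeff_mul (hf : AnalyticAt 𝕜 f 0) (hg : AnalyticAt 𝕜 g 0) :
    taylorCoeff (fun z => f z * g z) n =
      ∑ i ∈ Finset.range (n + 1), taylorCoeff f i * taylorCoeff g (n - i) := by
  rw [taylorCoeff, iteratedDeriv_fun_mul hf.contDiffAt hg.contDiffAt, Finset.sum_div]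
  refine Finset.sum_congr rfl fun i hi => ?_
  have hin : i ≤ n := Nat.lt_succ_iff.mp (Finset.mem_range.mp hi)
  have h := Nat.choose_mul_factorial_mul_factorial hin
  rw [taylorCoeff, taylorCoeff, ← h]
  have hc : (n.choose i : 𝕜) ≠ 0 := Nat.cast_ne_zero.mpr (Nat.choose_pos hin).ne'
  push_cast
  field_simp

lemma taylorCoeff_id_mul (hf : AnalyticAt 𝕜 f 0) (n : ℕ) :
    taylorCoeff (fun z => z * f z) (n + 1) = taylorCoeff f n := by
  have hid : ∀ i, taylorCoeff (fun z : 𝕜 => z) i = if i = 1 then 1 else 0 := by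
    intro i
    rcases eq_or_ne i 1 with rfl | hi
    · simp [taylorCoeff, iteratedDeriv_fun_id_zero]
    · simp [taylorCoeff, iteratedDeriv_fun_id_zero, hi]
  rw [taylorCoeff_mul (f := fun z => z) analyticAt_id hf]
  simp [hid]

lemma taylorCoeff_succ_of_eventually_eq (hg : AnalyticAt 𝕜 g 0) {c : 𝕜}
    (h : ∀ᶠ z in 𝓝 0, f z = c + z * g z) (n : ℕ) :
    taylorCoeff f (n + 1) = taylorCoeff g n := by
  rw [taylorCoeff_congr h, taylorCoeff, iteratedDeriv_const_add n.succ_pos, ← taylorCoeff,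
    taylorCoeff_id_mul hg]

end TaylorCoeff

lemma norm_sub_le_norm_one_sub_conj_mul {a b : ℂ} (ha : ‖a‖ ≤ 1) (hb : ‖b‖ ≤ 1) :
    ‖a - b‖ ≤ ‖1 - conj b * a‖ := by
  have key : ‖1 - conj b * a‖ ^ 2 - ‖a - b‖ ^ 2 = (1 - ‖a‖ ^ 2) * (1 - ‖b‖ ^ 2) := by
    apply ofReal_injective
    push_cast
    simp only [← mul_conj', map_sub, map_mul, map_one, conj_conj]
    ring
  have hprod : 0 ≤ (1 - ‖a‖ ^ 2) * (1 - ‖b‖ ^ 2) :=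
    mul_nonneg (by nlinarith [norm_nonneg a]) (by nlinarith [norm_nonneg b])
  exact (sq_le_sq₀ (norm_nonneg _) (norm_nonneg _)).mp (by linarith)

lemma one_sub_conj_mul_self (u : ℂ) : 1 - conj u * u = ((1 - ‖u‖ ^ 2 : ℝ) : ℂ) := by
  push_cast; rw [conj_mul']

lemma one_sub_conj_mul_ne_zero {u w : ℂ} (hu : ‖u‖ < 1) (hw : ‖w‖ ≤ 1) : 1 - conj u * w ≠ 0 := by
  refine sub_ne_zero.mpr (ne_of_apply_ne norm (ne_of_gt ?_))
  rw [norm_one, norm_mul, norm_conj]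
  nlinarith [norm_nonneg u, norm_nonneg w]

structure IsSchur (g : ℂ → ℂ) : Prop where
  differentiableOn : DifferentiableOn ℂ g (ball 0 1)
  mapsTo : MapsTo g (ball 0 1) (closedBall 0 1)

namespace IsSchur

variable {g : ℂ → ℂ}

lemma analyticAt_zero (hg : IsSchur g) : AnalyticAt ℂ g 0 :=
  hg.differentiableOn.analyticAt (ball_mem_nhds 0 one_pos)

lemma norm_le_one (hg : IsSchur g) {z : ℂ} (hz : z ∈ ball (0 : ℂ) 1) : ‖g z‖ ≤ 1 :=
  mem_closedBall_zero_iff.mp (hg.mapsTo hz)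

lemma dslope (hg : IsSchur g) (h0 : g 0 = 0) : IsSchur (dslope g 0) where
  differentiableOn := (differentiableOn_dslope (ball_mem_nhds 0 one_pos)).mpr hg.differentiableOn
  mapsTo z hz := by
    have hmaps : MapsTo g (ball 0 1) (closedBall (g 0) 1) := by rw [h0]; exact hg.mapsTo
    simpa using norm_dslope_le_div_of_mapsTo_ball hg.differentiableOn hmaps hz

lemma mobius (hg : IsSchur g) {u : ℂ} (hu : ‖u‖ < 1) :
    IsSchur fun z => (g z - u) / (1 - conj u * g z) := by
  have hden : ∀ z ∈ ball (0 : ℂ) 1, 1 - conj u * g z ≠ 0 := fun z hz =>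
    one_sub_conj_mul_ne_zero hu (hg.norm_le_one hz)
  refine ⟨(hg.differentiableOn.sub_const u).div
    ((differentiableOn_const 1).sub (hg.differentiableOn.const_mul _)) hden, fun z hz => ?_⟩
  rw [mem_closedBall_zero_iff, norm_div, div_le_one (norm_pos_iff.mpr (hden z hz))]
  exact norm_sub_le_norm_one_sub_conj_mul (hg.norm_le_one hz) hu.le

/-- One step of the Schur algorithm: for `‖g 0‖ < 1`, `k` is the Schwarz quotient of the Möbius
transform `(g - g 0) / (1 - conj (g 0) * g)`; for `‖g 0‖ = 1`, `g` is constant by the maximum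
modulus principle and `k = 0`. -/
lemma exists_eq_add_mul (hg : IsSchur g) :
    ∃ k, IsSchur k ∧ ∀ z ∈ ball (0 : ℂ) 1, g z = g 0 + z * (k z * (1 - conj (g 0) * g z)) := by
  have h0 : (0 : ℂ) ∈ ball (0 : ℂ) 1 := mem_ball_self one_pos
  set u := g 0
  rcases (hg.norm_le_one h0).eq_or_lt with hu | hu
  · have hmax : IsMaxOn (norm ∘ g) (ball 0 1) 0 := fun z hz => by
      simpa [hu] using hg.norm_le_one hz
    have hconst := Complex.eqOn_of_isPreconnected_of_isMaxOn_norm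
      (convex_ball _ _).isPreconnected isOpen_ball hg.differentiableOn h0 hmax
    refine ⟨0, ⟨differentiableOn_const 0, fun _ _ => by simp⟩, fun z hz => ?_⟩
    simpa using hconst hz
  · set M : ℂ → ℂ := fun z => (g z - u) / (1 - conj u * g z)
    have hM : IsSchur M := hg.mobius hu
    have hM0 : M 0 = 0 := by simp [M, u]
    refine ⟨_, hM.dslope hM0, fun z hz => ?_⟩
    have hMz : z * _root_.dslope M 0 z = M z := by
      simpa using sub_smul_dslope_of_zero hM0 z
    rw [← mul_assoc, hMz, div_mul_cancel₀ _ (one_sub_conj_mul_ne_zero hu (hg.norm_le_one hz))]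
    ring

lemma taylorCoeff_succ_of_eq_add_mul {k : ℂ → ℂ} (hg : IsSchur g) (hk : IsSchur k)
    (hgk : ∀ z ∈ ball (0 : ℂ) 1, g z = g 0 + z * (k z * (1 - conj (g 0) * g z))) (n : ℕ) :
    taylorCoeff g (n + 1) = taylorCoeff (fun z => k z * (1 - conj (g 0) * g z)) n :=
  taylorCoeff_succ_of_eventually_eq
    (by have := hg.analyticAt_zero; have := hk.analyticAt_zero; fun_prop)
    (eventually_of_mem (ball_mem_nhds 0 one_pos) hgk) n

theorem norm_taylorCoeff_one_le (hg : IsSchur g) : ‖taylorCoeff g 1‖ ≤ 1 - ‖g 0‖ ^ 2 := by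
  obtain ⟨k, hk, hgk⟩ := hg.exists_eq_add_mul
  have hs : 0 ≤ 1 - ‖g 0‖ ^ 2 := by
    nlinarith [hg.norm_le_one (mem_ball_self one_pos), norm_nonneg (g 0)]
  rw [taylorCoeff_succ_of_eq_add_mul hg hk hgk, taylorCoeff_zero, one_sub_conj_mul_self, norm_mul,
    norm_real, Real.norm_of_nonneg hs]
  exact mul_le_of_le_one_left hs (hk.norm_le_one (mem_ball_self one_pos))

theorem norm_taylorCoeff_two_le (hg : IsSchur g) : ‖taylorCoeff g 2‖ ≤ 1 - ‖g 0‖ ^ 2 := by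
  obtain ⟨k, hk, hgk⟩ := hg.exists_eq_add_mul
  set u := g 0
  set s : ℝ := 1 - ‖u‖ ^ 2
  have hs : 0 ≤ s := by nlinarith [hg.norm_le_one (mem_ball_self one_pos), norm_nonneg u]
  have h1 : taylorCoeff g 1 = k 0 * s := by
    rw [taylorCoeff_succ_of_eq_add_mul hg hk hgk, taylorCoeff_zero, one_sub_conj_mul_self]
  have h2 : taylorCoeff g 2 = s * (taylorCoeff k 1 - conj u * k 0 ^ 2) := by
    rw [taylorCoeff_succ_of_eq_add_mul hg hk hgk, taylorCoeff_mul hk.analyticAt_zero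
      (by have := hg.analyticAt_zero; fun_prop), Finset.sum_range_succ, Finset.sum_range_one,
      taylorCoeff_zero, taylorCoeff_zero, Nat.sub_zero, taylorCoeff_const_sub one_pos,
      taylorCoeff_const_mul, h1, one_sub_conj_mul_self]
    ring
  have hk1 := norm_taylorCoeff_one_le hk
  have hk0 := hk.norm_le_one (mem_ball_self one_pos)
  have hu := hg.norm_le_one (mem_ball_self one_pos)
  calc ‖taylorCoeff g 2‖ = s * ‖taylorCoeff k 1 - conj u * k 0 ^ 2‖ := by
        rw [h2, norm_mul, norm_real, Real.norm_of_nonneg hs]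
    _ ≤ s * (‖taylorCoeff k 1‖ + ‖u‖ * ‖k 0‖ ^ 2) := by
        gcongr
        refine (norm_sub_le _ _).trans_eq ?_
        rw [norm_mul, norm_conj, norm_pow]
    _ ≤ s * 1 := by
        gcongr
        nlinarith [norm_nonneg u, norm_nonneg (k 0)]
    _ = s := mul_one s

end IsSchur

lemma norm_sub_one_le_norm_add_one_sub {α : ℝ} {w : ℂ} (hα : α ≤ 1) (hw : α ≤ w.re) :
    ‖w - 1‖ ≤ ‖w + 1 - 2 * α‖ := by
  refine (sq_le_sq₀ (norm_nonneg _) (norm_nonneg _)).mp ?_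
  simp only [Complex.sq_norm, normSq_apply, sub_re, add_re, sub_im, add_im, one_re, one_im, mul_re,
    mul_im, ofReal_re, ofReal_im]
  norm_num
  nlinarith [mul_nonneg (sub_nonneg.mpr hw) (sub_nonneg.mpr hα)]

theorem exists_isSchur_eq_one_add_mul {α : ℝ} (hα : α < 1) {p : ℂ → ℂ}
    (hp : DifferentiableOn ℂ p (ball 0 1)) (h0 : p 0 = 1)
    (hre : ∀ z ∈ ball (0 : ℂ) 1, α ≤ (p z).re) :
    ∃ g, IsSchur g ∧ ∀ z ∈ ball (0 : ℂ) 1, p z = 1 + z * ((1 - 2 * α) * g z + g z * p z) := by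
  have hden : ∀ z ∈ ball (0 : ℂ) 1, p z + 1 - 2 * α ≠ 0 := fun z hz h => by
    have hre' : (p z + 1 - 2 * α).re = (p z).re + 1 - 2 * α := by simp
    rw [h, zero_re] at hre'
    linarith [hre z hz]
  set f : ℂ → ℂ := fun z => (p z - 1) / (p z + 1 - 2 * α)
  have hf : IsSchur f := by
    refine ⟨(hp.sub_const 1).div ((hp.add_const 1).sub_const _) hden, fun z hz => ?_⟩
    rw [mem_closedBall_zero_iff, norm_div, div_le_one (norm_pos_iff.mpr (hden z hz))]
    exact norm_sub_one_le_norm_add_one_sub hα.le (hre z hz)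
  have hf0 : f 0 = 0 := by simp [f, h0]
  refine ⟨_, hf.dslope hf0, fun z hz => ?_⟩
  have hfz : z * dslope f 0 z = f z := by simpa using sub_smul_dslope_of_zero hf0 z
  have hf_mul : f z * (p z + 1 - 2 * α) = p z - 1 := div_mul_cancel₀ _ (hden z hz)
  linear_combination (-(p z + 1 - 2 * α)) * hfz - hf_mul

lemma taylorCoeff_succ_of_eq_one_add_mul {c : ℂ} {p g : ℂ → ℂ} (hp : AnalyticAt ℂ p 0)
    (hg : AnalyticAt ℂ g 0) (hpg : ∀ᶠ z in 𝓝 0, p z = 1 + z * (c * g z + g z * p z)) (n : ℕ) :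
    taylorCoeff p (n + 1) = c * taylorCoeff g n +
      ∑ i ∈ Finset.range (n + 1), taylorCoeff g i * taylorCoeff p (n - i) := by
  rw [taylorCoeff_succ_of_eventually_eq (by fun_prop) hpg, taylorCoeff_add (by fun_prop)
    (by fun_prop), taylorCoeff_const_mul, taylorCoeff_mul hg hp]

lemma taylorCoeff_one_two_three_of_eq_one_add_mul {α : ℂ} {p g : ℂ → ℂ}
    (hp : AnalyticAt ℂ p 0) (hg : AnalyticAt ℂ g 0) (h0 : p 0 = 1)
    (hpg : ∀ᶠ z in 𝓝 0, p z = 1 + z * ((1 - 2 * α) * g z + g z * p z)) :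
    taylorCoeff p 1 = 2 * (1 - α) * g 0 ∧
      taylorCoeff p 2 = 2 * (1 - α) * (taylorCoeff g 1 + g 0 ^ 2) ∧
      taylorCoeff p 3 =
        2 * (1 - α) * (taylorCoeff g 2 + 2 * g 0 * taylorCoeff g 1 + g 0 ^ 3) := by
  have hcoeff := taylorCoeff_succ_of_eq_one_add_mul hp hg hpg
  have hb1 : taylorCoeff p 1 = 2 * (1 - α) * g 0 := by
    rw [hcoeff 0, Finset.sum_range_one, taylorCoeff_zero, taylorCoeff_zero, h0]
    ring
  have hb2 : taylorCoeff p 2 = 2 * (1 - α) * (taylorCoeff g 1 + g 0 ^ 2) := by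
    rw [hcoeff 1]
    simp only [Finset.sum_range_succ, Nat.sub_zero, Nat.sub_self, taylorCoeff_zero, h0, hb1]
    ring
  refine ⟨hb1, hb2, ?_⟩
  rw [hcoeff 2]
  simp only [Finset.sum_range_succ, Nat.reduceSub, Nat.sub_zero, Nat.sub_self, taylorCoeff_zero,
    h0, hb1, hb2]
  ring

theorem stmt_1_general (α : ℝ) (hα1 : α < 1)
    (p : ℂ → ℂ) (hp : DifferentiableOn ℂ p (ball (0:ℂ) 1))
    (h0 : p 0 = 1)
    (b : ℕ → ℂ) (hb : ∀ n, b n = iteratedDeriv n p 0 / (Nat.factorial n))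
    (hre : ∀ z ∈ ball (0:ℂ) 1, α ≤ (p z).re) :
    ‖b 3 - b 1 * b 2 / (1 - (α:ℂ)) + b 1 ^ 3 / (4 * (1 - (α:ℂ)) ^ 2)‖ ≤
      2 * (1 - α) - ‖b 1‖ ^ 2 / (2 * (1 - α)) := by
  obtain ⟨g, hg, hpg⟩ := exists_isSchur_eq_one_add_mul hα1 hp h0 hre
  obtain ⟨hb1, hb2, hb3⟩ := taylorCoeff_one_two_three_of_eq_one_add_mul
    (hp.analyticAt (ball_mem_nhds 0 one_pos)) hg.analyticAt_zero h0
    (eventually_of_mem (ball_mem_nhds 0 one_pos) hpg)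
  have hb' : ∀ n, b n = taylorCoeff p n := hb
  simp only [hb', hb1, hb2, hb3]
  have hα : (1 - α : ℂ) ≠ 0 := by exact_mod_cast (sub_pos.mpr hα1).ne'
  have hβ : ‖(2 * (1 - α) : ℂ)‖ = 2 * (1 - α) := by
    rw [show (2 * (1 - α) : ℂ) = ((2 * (1 - α) : ℝ) : ℂ) by push_cast; ring, norm_real,
      Real.norm_of_nonneg (by linarith)]
  calc _ = 2 * (1 - α) * ‖taylorCoeff g 2‖ := by
        rw [← hβ, ← norm_mul]; congr 1; field_simp; ring
    _ ≤ 2 * (1 - α) * (1 - ‖g 0‖ ^ 2) := by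
        gcongr
        exact hg.norm_taylorCoeff_two_le
    _ = _ := by
        rw [norm_mul, hβ]
        field_simp [(sub_pos.mpr hα1).ne']

theorem stmt_1 (α : ℝ) (hα0 : 0 ≤ α) (hα1 : α < 1)
    (p : ℂ → ℂ) (hp : DifferentiableOn ℂ p (ball (0:ℂ) 1))
    (h0 : p 0 = 1)
    (b : ℕ → ℂ) (hb : ∀ n, b n = iteratedDeriv n p 0 / (Nat.factorial n))
    (hre : ∀ z ∈ ball (0:ℂ) 1, α ≤ (p z).re) :
    ‖b 3 - b 1 * b 2 / (1 - (α:ℂ)) + b 1 ^ 3 / (4 * (1 - (α:ℂ)) ^ 2)‖ ≤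
      2 * (1 - α) - ‖b 1‖ ^ 2 / (2 * (1 - α)) :=
  stmt_1_general α hα1 p hp h0 b hb hre
end

section
/- Let 0 ≤ α < 1 and let f(z) = z + a_2 z² + a_3 z³ + ⋯ be holomorphic on the unit disk D with f'(z) ≠ 0 on D, satisfying Re(1 + z f''(z)/f'(z)) ≥ α for all z ∈ D (f is convex of order α). Then |a_3 - (2/3) a_2²| ≤ (1-α)/3. -/
/-!
Write `p(z) = 1 + z f''(z) / f'(z) - α`. Convexity of order `α` says exactly that `p` is holomorphic
on the disk with `Re p ≥ 0`, and `p(0) = 1 - α`. Carathéodory's lemma bounds the Taylor coefficients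
of such a function: `|p⁽ⁿ⁾(0) / n!| ≤ 2 Re p(0)`. On a circle `|z| = r`, the function
`z⁻ⁿ (p + p̄) = z⁻ⁿ p + r⁻²ⁿ conj (zⁿ p)` averages to `p⁽ⁿ⁾(0) / n! + 0`, and its modulus is
`r⁻ⁿ · 2 Re p`, whose average is `2 r⁻ⁿ Re p(0)`; then let `r → 1`. Finally
`p''(0) = 2 (f'''(0) - f''(0)²) = 12 (a₃ - (2/3) a₂²)`.
-/

open Complex Metric Real Set Filter Topology Nat ComplexConjugate

section CircleAverage

variable {c : ℂ} {R : ℝ}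

theorem Real.norm_circleAverage_le {E : Type*} [NormedAddCommGroup E] [NormedSpace ℝ E]
    (f : ℂ → E) : ‖circleAverage f c R‖ ≤ circleAverage (fun z ↦ ‖f z‖) c R := by
  rw [circleAverage_def, circleAverage_def, norm_smul, smul_eq_mul, norm_inv,
    Real.norm_of_nonneg two_pi_pos.le]
  gcongr
  exact intervalIntegral.norm_integral_le_integral_norm two_pi_pos.le

theorem sub_inv_pow_mul_two_re_eq_of_mem_sphere {z : ℂ} (hR : R ≠ 0) (hz : z ∈ sphere c R) (n : ℕ)
    (w : ℂ) : (z - c)⁻¹ ^ n * ((2 * w.re : ℝ) : ℂ) =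
      (z - c)⁻¹ ^ n * w + ((R ^ 2)⁻¹ ^ n : ℝ) • conj ((z - c) ^ n * w) := by
  have hzc : z - c ≠ 0 := sub_ne_zero.2 (ne_of_mem_sphere hz hR)
  have hR2 : (R : ℂ) ^ 2 ≠ 0 := by exact_mod_cast pow_ne_zero 2 hR
  have hconj_sub : conj (z - c) = (R : ℂ) ^ 2 * (z - c)⁻¹ := by
    rw [eq_mul_inv_iff_mul_eq₀ hzc, mul_comm, mul_conj, normSq_eq_norm_sq,
      mem_sphere_iff_norm.1 hz, ofReal_pow]
  rw [← add_conj, map_mul, map_pow, hconj_sub, Complex.real_smul]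
  push_cast
  rw [mul_pow, ← mul_assoc, ← mul_assoc, ← mul_pow, inv_mul_cancel₀ hR2, one_pow, one_mul]
  ring

variable {p : ℂ → ℂ}

theorem DiffContOnCl.circleAverage_sub_inv_pow_mul (hR : 0 < R)
    (hp : DiffContOnCl ℂ p (ball c R)) (n : ℕ) :
    Real.circleAverage (fun z ↦ (z - c)⁻¹ ^ n * p z) c R = iteratedDeriv n p c / n ! := by
  have hcauchy := hp.circleIntegral_one_div_sub_center_pow_smul hR n
  rw [circleAverage_eq_circleIntegral hR.ne']
  calc (2 * π * I)⁻¹ • ∮ z in C(c, R), (z - c)⁻¹ • ((z - c)⁻¹ ^ n * p z)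
      = (2 * π * I)⁻¹ • ∮ z in C(c, R), (1 / (z - c) ^ (n + 1)) • p z := by
        congr 1
        refine circleIntegral.integral_congr hR.le fun z _ ↦ ?_
        simp only [smul_eq_mul, one_div, inv_pow, pow_succ, mul_inv]
        ring
    _ = iteratedDeriv n p c / n ! := by
        rw [hcauchy, smul_smul, smul_eq_mul]
        field_simp [two_pi_I_ne_zero]

theorem DiffContOnCl.circleAverage_sub_pow_mul_eq_zero (hp : DiffContOnCl ℂ p (ball c |R|))
    {n : ℕ} (hn : n ≠ 0) : Real.circleAverage (fun z ↦ (z - c) ^ n * p z) c R = 0 := by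
  have hq : DiffContOnCl ℂ (fun z ↦ (z - c) ^ n * p z) (ball c |R|) :=
    (((differentiable_id.sub_const c).pow n).diffContOnCl).smul hp
  rw [hq.circleAverage, sub_self, zero_pow hn, zero_mul]

theorem DiffContOnCl.circleAverage_sub_inv_pow_mul_two_re (hR : 0 < R)
    (hp : DiffContOnCl ℂ p (ball c R)) {n : ℕ} (hn : n ≠ 0) :
    Real.circleAverage (fun z ↦ (z - c)⁻¹ ^ n * ((2 * (p z).re : ℝ) : ℂ)) c R =
      iteratedDeriv n p c / n ! := by
  have hp' : DiffContOnCl ℂ p (ball c |R|) := by rwa [abs_of_pos hR]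
  have hpc : ContinuousOn p (sphere c |R|) := hp'.continuousOn_ball.mono sphere_subset_closedBall
  have hne : ∀ z ∈ sphere c |R|, z - c ≠ 0 := fun z hz ↦
    sub_ne_zero.2 (ne_of_mem_sphere hz (abs_pos.2 hR.ne').ne')
  have hI1 : CircleIntegrable (fun z ↦ (z - c)⁻¹ ^ n * p z) c R :=
    ((((continuousOn_id.sub continuousOn_const).inv₀ hne).pow n).mul hpc).circleIntegrable'
  have hI2 : CircleIntegrable (fun z ↦ (z - c) ^ n * p z) c R :=
    ContinuousOn.circleIntegrable' (by fun_prop)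
  have hI3 : CircleIntegrable (fun z ↦ ((R ^ 2)⁻¹ ^ n : ℝ) • conj ((z - c) ^ n * p z)) c R :=
    ContinuousOn.circleIntegrable' (by fun_prop)
  have hconj : Real.circleAverage (fun z ↦ conj ((z - c) ^ n * p z)) c R =
      conj (Real.circleAverage (fun z ↦ (z - c) ^ n * p z) c R) :=
    conjCLE.toContinuousLinearMap.circleAverage_comp_comm hI2
  rw [circleAverage_congr_sphere fun z hz ↦ sub_inv_pow_mul_two_re_eq_of_mem_sphere hR.ne'
      (abs_of_pos hR ▸ hz) n (p z), circleAverage_fun_add hI1 hI3, circleAverage_fun_smul, hconj,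
    hp'.circleAverage_sub_pow_mul_eq_zero hn, map_zero, smul_zero, add_zero,
    hp.circleAverage_sub_inv_pow_mul hR n]

end CircleAverage

section Caratheodory

variable {c : ℂ} {R : ℝ} {p : ℂ → ℂ} {n : ℕ}

theorem DiffContOnCl.norm_iteratedDeriv_div_factorial_mul_pow_le (hR : 0 < R)
    (hp : DiffContOnCl ℂ p (ball c R)) (hre : ∀ z ∈ sphere c R, 0 ≤ (p z).re) (hn : n ≠ 0) :
    ‖iteratedDeriv n p c‖ / n ! * R ^ n ≤ 2 * (p c).re := by
  have hp' : DiffContOnCl ℂ p (ball c |R|) := by rwa [abs_of_pos hR]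
  have hpI : CircleIntegrable p c R :=
    (hp'.continuousOn_ball.mono sphere_subset_closedBall).circleIntegrable'
  have hnorm : ∀ z ∈ sphere c |R|, ‖(z - c)⁻¹ ^ n * ((2 * (p z).re : ℝ) : ℂ)‖ =
      ((R ^ n)⁻¹ * 2) • (p z).re := by
    intro z hz
    rw [abs_of_pos hR] at hz
    rw [norm_mul, norm_pow, norm_inv, mem_sphere_iff_norm.1 hz, norm_real,
      Real.norm_of_nonneg (by linarith [hre z hz]), inv_pow, smul_eq_mul, mul_assoc]
  have hre_avg : Real.circleAverage (fun z ↦ (p z).re) c R = (Real.circleAverage p c R).re :=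
    reCLM.circleAverage_comp_comm hpI
  calc ‖iteratedDeriv n p c‖ / n ! * R ^ n
      = ‖Real.circleAverage (fun z ↦ (z - c)⁻¹ ^ n * ((2 * (p z).re : ℝ) : ℂ)) c R‖ * R ^ n := by
        rw [hp.circleAverage_sub_inv_pow_mul_two_re hR hn, norm_div, Complex.norm_natCast]
    _ ≤ Real.circleAverage (fun z ↦ ‖(z - c)⁻¹ ^ n * ((2 * (p z).re : ℝ) : ℂ)‖) c R * R ^ n := by
        gcongr
        exact norm_circleAverage_le _
    _ = 2 * (p c).re := by
        have hRn : R ^ n ≠ 0 := pow_ne_zero n hR.ne'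
        rw [circleAverage_congr_sphere hnorm, circleAverage_fun_smul, hre_avg, hp'.circleAverage,
          smul_eq_mul]
        field_simp

theorem DifferentiableOn.norm_iteratedDeriv_div_factorial_mul_pow_le (hR : 0 < R)
    (hp : DifferentiableOn ℂ p (ball c R)) (hre : ∀ z ∈ ball c R, 0 ≤ (p z).re) (hn : n ≠ 0) :
    ‖iteratedDeriv n p c‖ / n ! * R ^ n ≤ 2 * (p c).re := by
  have hr : ∀ r ∈ Ioo 0 R, ‖iteratedDeriv n p c‖ / n ! * r ^ n ≤ 2 * (p c).re := fun r hr ↦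
    have hsub : closedBall c r ⊆ ball c R := closedBall_subset_ball hr.2
    (hp.diffContOnCl_ball hsub).norm_iteratedDeriv_div_factorial_mul_pow_le hr.1
      (fun z hz ↦ hre z (hsub (sphere_subset_closedBall hz))) hn
  have hlim : Tendsto (fun r ↦ ‖iteratedDeriv n p c‖ / n ! * r ^ n) (𝓝[<] R)
      (𝓝 (‖iteratedDeriv n p c‖ / n ! * R ^ n)) :=
    ((continuous_const.mul (continuous_pow n)).tendsto R).mono_left nhdsWithin_le_nhds
  exact le_of_tendsto hlim (eventually_of_mem (Ioo_mem_nhdsLT hR) hr)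

end Caratheodory

section Derivatives

variable {𝕜 : Type*} [NontriviallyNormedField 𝕜] {f g : 𝕜 → 𝕜} {x : 𝕜}

theorem iteratedDeriv_two_const_add_id_mul (a : 𝕜) (hg : ContDiffAt 𝕜 2 g 0) :
    iteratedDeriv 2 (fun z ↦ a + z * g z) 0 = 2 * deriv g 0 := by
  rw [iteratedDeriv_const_add two_pos]
  simpa [Finset.sum_range_succ, iteratedDeriv_fun_id_zero] using
    iteratedDeriv_fun_mul (f := fun z ↦ z) contDiffAt_id hg

theorem AnalyticAt.deriv_iteratedDeriv_two_div_deriv [CompleteSpace 𝕜] (hf : AnalyticAt 𝕜 f x)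
    (hx : deriv f x ≠ 0) :
    deriv (fun z ↦ iteratedDeriv 2 f z / deriv f z) x =
      (iteratedDeriv 3 f x * deriv f x - iteratedDeriv 2 f x ^ 2) / deriv f x ^ 2 := by
  have h2 : iteratedDeriv 2 f = deriv (deriv f) := by rw [iteratedDeriv_succ, iteratedDeriv_one]
  have h3 : iteratedDeriv 3 f = deriv (iteratedDeriv 2 f) := iteratedDeriv_succ
  have hd2 : DifferentiableAt 𝕜 (iteratedDeriv 2 f) x := h2 ▸ hf.deriv.deriv.differentiableAt
  rw [deriv_fun_div hd2 hf.deriv.differentiableAt hx, h3, h2]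
  ring

end Derivatives

theorem stmt_6_general (α : ℝ)
    (f : ℂ → ℂ) (hf : DifferentiableOn ℂ f (ball (0:ℂ) 1))
    (h1 : deriv f 0 = 1)
    (hf' : ∀ z ∈ ball (0:ℂ) 1, deriv f z ≠ 0)
    (a : ℕ → ℂ) (ha : ∀ n, a n = iteratedDeriv n f 0 / (Nat.factorial n))
    (hconv : ∀ z ∈ ball (0:ℂ) 1,
      α ≤ (1 + z * iteratedDeriv 2 f z / deriv f z).re) :
    ‖a 3 - (2/3 : ℂ) * a 2 ^ 2‖ ≤ (1 - α) / 3 := by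
  have hfa : AnalyticOnNhd ℂ f (ball 0 1) := hf.analyticOnNhd isOpen_ball
  have h0mem : (0 : ℂ) ∈ ball (0 : ℂ) 1 := mem_ball_self one_pos
  set g : ℂ → ℂ := fun z ↦ iteratedDeriv 2 f z / deriv f z
  have hf2 : AnalyticOnNhd ℂ (iteratedDeriv 2 f) (ball 0 1) := by
    rw [iteratedDeriv_eq_iterate]
    exact hfa.iterated_deriv 2
  have hg : AnalyticOnNhd ℂ g (ball 0 1) := fun z hz ↦
    (hf2 z hz).div (hfa.deriv z hz) (hf' z hz)
  have hp : DifferentiableOn ℂ (fun z ↦ ((1 - α : ℝ) : ℂ) + z * g z) (ball 0 1) :=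
    (differentiableOn_const _).add (differentiableOn_id.mul hg.differentiableOn)
  have hre : ∀ z ∈ ball (0 : ℂ) 1, 0 ≤ (((1 - α : ℝ) : ℂ) + z * g z).re := fun z hz ↦ by
    have := hconv z hz
    simp only [g, ← mul_div_assoc, add_re, ofReal_re, one_re] at this ⊢
    linarith
  have hcara := hp.norm_iteratedDeriv_div_factorial_mul_pow_le one_pos hre two_ne_zero
  rw [iteratedDeriv_two_const_add_id_mul _ (hg 0 h0mem).contDiffAt,
    (hfa 0 h0mem).deriv_iteratedDeriv_two_div_deriv (h1 ▸ one_ne_zero), h1] at hcara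
  have hcoeff : a 3 - (2/3 : ℂ) * a 2 ^ 2 = (iteratedDeriv 3 f 0 - iteratedDeriv 2 f 0 ^ 2) / 6 := by
    rw [ha, ha]
    norm_num [Nat.factorial]
    ring
  simp only [mul_one, div_one, one_pow, zero_mul, add_zero, ofReal_re, norm_mul, Complex.norm_two,
    Nat.factorial_two, Nat.cast_ofNat] at hcara
  rw [hcoeff, norm_div, Complex.norm_ofNat]
  linarith

theorem stmt_6 (α : ℝ) (hα0 : 0 ≤ α) (hα1 : α < 1)
    (f : ℂ → ℂ) (hf : DifferentiableOn ℂ f (ball (0:ℂ) 1))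
    (h0 : f 0 = 0) (h1 : deriv f 0 = 1)
    (hf' : ∀ z ∈ ball (0:ℂ) 1, deriv f z ≠ 0)
    (a : ℕ → ℂ) (ha : ∀ n, a n = iteratedDeriv n f 0 / (Nat.factorial n))
    (hconv : ∀ z ∈ ball (0:ℂ) 1,
      α ≤ (1 + z * iteratedDeriv 2 f z / deriv f z).re) :
    ‖a 3 - (2/3 : ℂ) * a 2 ^ 2‖ ≤ (1 - α) / 3 :=
  stmt_6_general α f hf h1 hf' a ha hconv
end

section
/- For α ∈ [0, (37-√505)/72], the function h(x) = ((12α² - 10α + 1)/(4(1-α)²)) x³ - (1/(2(1-α))) x² + (5-7α) x + 2(1-α) is strictly monotone increasing on the interval [0, 2(1-α)]. -/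
/-!
Rescaling `x = 2(1-α) t` turns `h'(x)` into `p(t)` with
`p(t) = 3c t² - 2t + (5 - 7α)`, `c = 12α² - 10α + 1`, so it suffices that `p > 0` on `[0, 1)`.
If `c ≥ 0`, then `p(t) ≥ 5 - 7α - 2t > 3 - 7α > 0`. If `c < 0`, `p` is concave and
`p(t) = (1 - t) p(0) + t p(1) - 3c t (1 - t)`, where `p(0) = 5 - 7α > 0` and
`p(1) = 36α² - 37α + 6 ≥ 0` because `α` lies below the smaller root `(37 - √505)/72`.
-/

open Set

theorem hasDerivAt_cubic (a b c d x : ℝ) :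
    HasDerivAt (fun x => a * x ^ 3 + b * x ^ 2 + c * x + d) (3 * a * x ^ 2 + 2 * b * x + c) x := by
  have := ((((hasDerivAt_pow 3 x).const_mul a).add ((hasDerivAt_pow 2 x).const_mul b)).add
    ((hasDerivAt_id x).const_mul c)).add_const d
  exact this.congr_deriv (by norm_num; ring)

theorem strictMonoOn_cubic {a b c d l r : ℝ}
    (hderiv : ∀ x ∈ Ioo l r, 0 < 3 * a * x ^ 2 + 2 * b * x + c) :
    StrictMonoOn (fun x => a * x ^ 3 + b * x ^ 2 + c * x + d) (Icc l r) := by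
  refine strictMonoOn_of_deriv_pos (convex_Icc l r) (by fun_prop) fun x hx => ?_
  rw [interior_Icc] at hx
  rw [(hasDerivAt_cubic a b c d x).deriv]
  exact hderiv x hx

theorem quadratic_nonneg_of_le_smaller_root {α : ℝ} (hα : α ≤ (37 - Real.sqrt 505) / 72) :
    0 ≤ 36 * α ^ 2 - 37 * α + 6 := by
  have hsq : Real.sqrt 505 ^ 2 = 505 := Real.sq_sqrt (by norm_num)
  nlinarith [Real.sqrt_nonneg 505]

theorem le_of_le_smaller_root {α : ℝ} (hα : α ≤ (37 - Real.sqrt 505) / 72) : α ≤ 15 / 72 := by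
  have h22 : (22 : ℝ) ≤ Real.sqrt 505 := Real.le_sqrt_of_sq_le (by norm_num)
  linarith

theorem normalized_deriv_pos {α t : ℝ} (hα : α ≤ (37 - Real.sqrt 505) / 72)
    (ht0 : 0 ≤ t) (ht1 : t < 1) :
    0 < 3 * (12 * α ^ 2 - 10 * α + 1) * t ^ 2 - 2 * t + (5 - 7 * α) := by
  have hα15 := le_of_le_smaller_root hα
  rcases le_or_gt 0 (12 * α ^ 2 - 10 * α + 1) with hc | hc
  · nlinarith [mul_nonneg hc (sq_nonneg t)]
  · have hp1 := quadratic_nonneg_of_le_smaller_root hα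
    have hmid : 0 ≤ -(12 * α ^ 2 - 10 * α + 1) * (t * (1 - t)) :=
      mul_nonneg (by linarith) (mul_nonneg ht0 (by linarith))
    nlinarith [mul_nonneg ht0 hp1, mul_pos (sub_pos.2 ht1) (by linarith : (0 : ℝ) < 5 - 7 * α)]

theorem stmt_10_general (α : ℝ) (hα1 : α ≤ (37 - Real.sqrt 505) / 72)
    (h : ℝ → ℝ)
    (hh : ∀ x, h x = (12 * α ^ 2 - 10 * α + 1) / (4 * (1 - α) ^ 2) * x ^ 3
      - 1 / (2 * (1 - α)) * x ^ 2 + (5 - 7 * α) * x + 2 * (1 - α)) :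
    StrictMonoOn h (Set.Icc 0 (2 * (1 - α))) := by
  have hL : 0 < 2 * (1 - α) := by linarith [le_of_le_smaller_root hα1]
  have h_eq : h = fun x => (12 * α ^ 2 - 10 * α + 1) / (4 * (1 - α) ^ 2) * x ^ 3
      + (-(1 / (2 * (1 - α)))) * x ^ 2 + (5 - 7 * α) * x + 2 * (1 - α) := by
    funext x
    rw [hh]
    ring
  rw [h_eq]
  refine strictMonoOn_cubic fun x ⟨hx0, hxL⟩ => ?_
  have h_rescale : 3 * ((12 * α ^ 2 - 10 * α + 1) / (4 * (1 - α) ^ 2)) * x ^ 2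
      + 2 * (-(1 / (2 * (1 - α)))) * x + (5 - 7 * α)
      = 3 * (12 * α ^ 2 - 10 * α + 1) * (x / (2 * (1 - α))) ^ 2
        - 2 * (x / (2 * (1 - α))) + (5 - 7 * α) := by
    field_simp
    ring
  rw [h_rescale]
  exact normalized_deriv_pos hα1 (div_nonneg hx0.le hL.le) ((div_lt_one hL).2 hxL)

theorem stmt_10 (α : ℝ) (hα0 : 0 ≤ α) (hα1 : α ≤ (37 - Real.sqrt 505) / 72)
    (h : ℝ → ℝ)
    (hh : ∀ x, h x = (12 * α ^ 2 - 10 * α + 1) / (4 * (1 - α) ^ 2) * x ^ 3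
      - 1 / (2 * (1 - α)) * x ^ 2 + (5 - 7 * α) * x + 2 * (1 - α)) :
    StrictMonoOn h (Set.Icc 0 (2 * (1 - α))) :=
  stmt_10_general α hα1 h hh
end

section
/- For α ∈ [0, (37-√505)/72], the maximum of h(x) = ((12α²-10α+1)/(4(1-α)²)) x³ - (1/(2(1-α))) x² + (5-7α) x + 2(1-α) over x ∈ [0, 2(1-α)] equals h(2(1-α)) = (1-α)(3-4α)(4-6α). -/
theorem stmt_11 (α : ℝ) (hα0 : 0 ≤ α) (hα1 : α ≤ (37 - Real.sqrt 505) / 72)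
    (h : ℝ → ℝ)
    (hh : ∀ x, h x = (12 * α ^ 2 - 10 * α + 1) / (4 * (1 - α) ^ 2) * x ^ 3
      - 1 / (2 * (1 - α)) * x ^ 2 + (5 - 7 * α) * x + 2 * (1 - α)) :
    (∀ x ∈ Set.Icc 0 (2 * (1 - α)), h x ≤ h (2 * (1 - α))) ∧
      h (2 * (1 - α)) = (1 - α) * (3 - 4 * α) * (4 - 6 * α) := by
  have hsq : Real.sqrt 505 ^ 2 = 505 := Real.sq_sqrt (by norm_num)
  have hs0 : 0 ≤ Real.sqrt 505 := Real.sqrt_nonneg 505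
  have hs22 : (22:ℝ) ≤ Real.sqrt 505 := by nlinarith
  have hα2 : α ≤ 15/72 := by
    have : (37 - Real.sqrt 505) / 72 ≤ 15/72 := by
      apply div_le_div_of_nonneg_right ?_ (by norm_num)
      · linarith
    linarith
  have hc : (0:ℝ) < 1 - α := by linarith
  have h37 : Real.sqrt 505 ≤ 37 - 72 * α := by linarith
  have hP : 0 ≤ 36 * α ^ 2 - 37 * α + 6 := by nlinarith
  constructor
  · intro x hx
    obtain ⟨hx0, hx2⟩ := hx
    rw [hh, hh]
    rw [← sub_nonneg]
    have hne : (1 - α) ≠ 0 := ne_of_gt hc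
    have key : (12 * α ^ 2 - 10 * α + 1) / (4 * (1 - α) ^ 2) * (2*(1-α)) ^ 3
      - 1 / (2 * (1 - α)) * (2*(1-α)) ^ 2 + (5 - 7 * α) * (2*(1-α)) + 2 * (1 - α)
      - ((12 * α ^ 2 - 10 * α + 1) / (4 * (1 - α) ^ 2) * x ^ 3
      - 1 / (2 * (1 - α)) * x ^ 2 + (5 - 7 * α) * x + 2 * (1 - α))
      = (2*(1-α) - x) * ((12*α^2-10*α+1) * (x - 2*(1-α))^2
          + 2*(1-α)*(36*α^2-30*α+2)*x + 4*(1-α)^2*(4-7*α)) / (4 * (1 - α) ^ 2) := by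
      field_simp
      ring
    rw [key]
    apply div_nonneg _ (by positivity)
    apply mul_nonneg (by linarith)
    nlinarith [sq_nonneg (x - 2*(1-α)), mul_nonneg hx0 hP, sq_nonneg x,
      mul_nonneg (mul_nonneg hx0 hx0) hα0, mul_nonneg hP (sq_nonneg (x - 2*(1-α))),
      mul_nonneg (mul_nonneg hc.le hc.le) hP, mul_nonneg hα0 (sq_nonneg (x-2*(1-α)))]
  · rw [hh]
    field_simp
    ring
end

section
/- Let n, m ∈ ℕ with m ≥ 2 and p, q ≥ 1 with p + q = m. Suppose complex numbers a_{kl} (1 ≤ k, l ≤ n) and a constant C₀ ≥ 0 satisfy max_{1≤k≤n} |z_k^q (∑_{l=1}^n a_{kl} z_l^p)| ≤ C₀ (max_{1≤k≤n} |z_k|)^m for all z in the open unit polydisk D^n. Then max_{1≤k≤n} ∑_{l=1}^n |a_{kl}| ≤ C₀. -/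
/-! Test the bound at `z = uₗ / 2`, where each `uₗ` is unimodular with `uₗ ^ p` rotating `aₖₗ` onto
the positive real axis. Then `∑ₗ aₖₗ zₗ ^ p = 2⁻ᵖ ∑ₗ |aₖₗ|`, and since `|zₖ| = ‖z‖ = 1/2` the
hypothesis reads `2⁻ᵐ ∑ₗ |aₖₗ| ≤ C₀ 2⁻ᵐ`. -/

open Finset Complex

lemma exists_norm_eq_one_mul_pow_eq_norm (w : ℂ) {p : ℕ} (hp : p ≠ 0) :
    ∃ u : ℂ, ‖u‖ = 1 ∧ w * u ^ p = ‖w‖ := by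
  refine ⟨exp (-(arg w / p) * I), by exact_mod_cast norm_exp_ofReal_mul_I _, ?_⟩
  have hrot : exp (-(arg w / p) * I) ^ p = exp (-(arg w * I)) := by
    rw [← exp_nat_mul]
    congr 1
    field_simp
  calc w * exp (-(arg w / p) * I) ^ p
      = ‖w‖ * exp (arg w * I) * exp (-(arg w * I)) := by rw [hrot, norm_mul_exp_arg_mul_I]
    _ = ‖w‖ := by rw [mul_assoc, ← exp_add, add_neg_cancel, exp_zero, mul_one]

lemma exists_forall_norm_eq_one_sum_mul_pow_eq {ι : Type*} [Fintype ι] (a : ι → ℂ) {p : ℕ}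
    (hp : p ≠ 0) : ∃ u : ι → ℂ, (∀ l, ‖u l‖ = 1) ∧ ∑ l, a l * u l ^ p = ∑ l, ‖a l‖ := by
  choose u hu₁ hu using fun l => exists_norm_eq_one_mul_pow_eq_norm (a l) hp
  exact ⟨u, hu₁, by push_cast; exact sum_congr rfl fun l _ => hu l⟩

lemma pi_norm_eq_of_forall_norm_eq {ι E : Type*} [Fintype ι] [Nonempty ι]
    [SeminormedAddCommGroup E] {z : ι → E} {r : ℝ} (h : ∀ i, ‖z i‖ = r) : ‖z‖ = r := by
  obtain ⟨i⟩ := ‹Nonempty ι›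
  refine le_antisymm ((pi_norm_le_iff_of_nonneg (h i ▸ norm_nonneg _)).2 fun j => (h j).le) ?_
  exact h i ▸ norm_le_pi_norm z i

theorem stmt_13_general (n m p q : ℕ) (hp : 1 ≤ p)
    (hpq : p + q = m) (a : Fin n → Fin n → ℂ) (C₀ : ℝ)
    (hbound : ∀ z : Fin n → ℂ, (∀ k, ‖z k‖ < 1) →
      ∀ k, ‖z k ^ q * ∑ l, a k l * z l ^ p‖ ≤ C₀ * ‖z‖ ^ m) :
    ∀ k, ∑ l, ‖a k l‖ ≤ C₀ := by
  intro k
  have : Nonempty (Fin n) := ⟨k⟩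
  obtain ⟨u, hu₁, hu⟩ := exists_forall_norm_eq_one_sum_mul_pow_eq (a k) (by omega : p ≠ 0)
  set z : Fin n → ℂ := fun l => (1 / 2 : ℂ) * u l
  have hz : ∀ l, ‖z l‖ = 1 / 2 := fun l => by simp [z, hu₁ l]
  have hsum : ∑ l, a k l * z l ^ p = (1 / 2 : ℂ) ^ p * ∑ l, ‖a k l‖ := by
    simp only [z, mul_pow, ← hu, mul_sum]
    exact sum_congr rfl fun l _ => by ring
  have hS : 0 ≤ ∑ l, ‖a k l‖ := sum_nonneg fun l _ => norm_nonneg _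
  have hlhs : ‖z k ^ q * ∑ l, a k l * z l ^ p‖ = (1 / 2) ^ m * ∑ l, ‖a k l‖ := by
    rw [hsum, norm_mul, norm_mul, norm_pow, norm_pow, hz, norm_real, Real.norm_of_nonneg hS,
      ← hpq]
    norm_num
    ring
  have h := hbound z (fun l => by rw [hz]; norm_num) k
  rw [hlhs, pi_norm_eq_of_forall_norm_eq hz, mul_comm C₀] at h
  exact le_of_mul_le_mul_left h (by positivity)

theorem stmt_13 (n m p q : ℕ) (hm : 2 ≤ m) (hp : 1 ≤ p) (hq : 1 ≤ q)
    (hpq : p + q = m) (a : Fin n → Fin n → ℂ) (C₀ : ℝ) (hC₀ : 0 ≤ C₀)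
    (hbound : ∀ z : Fin n → ℂ, (∀ k, ‖z k‖ < 1) →
      ∀ k, ‖z k ^ q * ∑ l, a k l * z l ^ p‖ ≤ C₀ * ‖z‖ ^ m) :
    ∀ k, ∑ l, ‖a k l‖ ≤ C₀ :=
  stmt_13_general n m p q hp hpq a C₀ hbound
end

section
/- Let g : D → ℂ be holomorphic with g(0) = 0, g'(0) = 1, and suppose Re(g(z)/z) ≥ α for all z ∈ D ∖ {0}, where 0 ≤ α < 1. Then for every m ≥ 2, the Taylor coefficient c_m = g^{(m)}(0)/m! satisfies |c_m| ≤ 2(1-α). -/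
/-
Carathéodory's coefficient bound. If `f` is holomorphic on a closed disc of radius `R` about `c`,
with Taylor coefficients `aₙ`, the Cauchy formula gives `aₙ` as the circle average of
`(z - c)⁻ⁿ f z`, while for `n ≥ 1` the circle average of `(z - c)⁻ⁿ (conj f z)`, which equals
`R⁻²ⁿ conj ((z - c)ⁿ f z)` on the circle, vanishes by the mean value property. So `aₙ` is the
circle average of `(z - c)⁻ⁿ · 2 Re f z`, and when `Re f ≥ 0` this gives
`‖aₙ‖ Rⁿ ≤ 2 · (circle average of Re f) = 2 Re f(c)`.
The theorem follows by applying this to `g z / z - α` (that is, `dslope g 0 - α`), whose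
`n`-th coefficient is `c (n + 1)` and whose value at `0` is `1 - α`, and letting `R → 1`.
-/

open Complex Metric Real
open scoped Nat ComplexConjugate Topology

theorem norm_circleAverage_le_circleAverage_norm {E : Type*} [NormedAddCommGroup E]
    [NormedSpace ℝ E] {f : ℂ → E} {c : ℂ} {R : ℝ} :
    ‖circleAverage f c R‖ ≤ circleAverage (fun z ↦ ‖f z‖) c R := by
  rw [circleAverage, circleAverage, norm_smul, smul_eq_mul, Real.norm_of_nonneg (by positivity)]
  gcongr
  exact intervalIntegral.norm_integral_le_integral_norm two_pi_pos.le

theorem AnalyticAt.iteratedDeriv_dslope_div_factorial {𝕜 : Type*} [NontriviallyNormedField 𝕜]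
    [CompleteSpace 𝕜] [CharZero 𝕜] {f : 𝕜 → 𝕜} {x : 𝕜} (hf : AnalyticAt 𝕜 f x) (n : ℕ) :
    iteratedDeriv n (dslope f x) x / n ! = iteratedDeriv (n + 1) f x / (n + 1)! := by
  have h := hf.hasFPowerSeriesAt.has_fpower_series_dslope_fslope
  simpa [FormalMultilinearSeries.coeff_fslope] using
    congr_arg (FormalMultilinearSeries.coeff · n)
      (h.analyticAt.hasFPowerSeriesAt.eq_formalMultilinearSeries h)

section Caratheodory

variable {f : ℂ → ℂ} {c : ℂ} {R : ℝ}

theorem circleAverage_inv_sub_center_pow_mul (hR : 0 < R)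
    (hf : DifferentiableOn ℂ f (closedBall c R)) (n : ℕ) :
    circleAverage (fun z ↦ (z - c)⁻¹ ^ n * f z) c R = iteratedDeriv n f c / n ! := by
  have hkernel : ∀ z : ℂ, (z - c)⁻¹ • ((z - c)⁻¹ ^ n * f z) = (1 / (z - c) ^ (n + 1)) • f z := by
    intro z; rw [smul_eq_mul, smul_eq_mul, ← mul_assoc, one_div, ← inv_pow, pow_succ']
  rw [circleAverage_eq_circleIntegral hR.ne']
  simp_rw [hkernel, hf.circleIntegral_one_div_sub_center_pow_smul hR n, smul_eq_mul]
  field_simp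

theorem circleAverage_re (hR : 0 < R) (hf : DifferentiableOn ℂ f (closedBall c R)) :
    circleAverage (fun z ↦ (f z).re) c R = (f c).re := by
  have hf' : DiffContOnCl ℂ f (ball c |R|) := by
    simpa [abs_of_pos hR] using hf.diffContOnCl_ball subset_rfl
  rw [← hf'.circleAverage]
  exact reCLM.circleAverage_comp_comm
    ((hf.continuousOn.mono sphere_subset_closedBall).circleIntegrable hR.le)

theorem circleAverage_sub_center_pow_mul_eq_zero (hR : 0 < R)
    (hf : DifferentiableOn ℂ f (closedBall c R)) {n : ℕ} (hn : n ≠ 0) :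
    circleAverage (fun z ↦ (z - c) ^ n * f z) c R = 0 := by
  have hd : DifferentiableOn ℂ (fun z ↦ (z - c) ^ n * f z) (closedBall c R) := by fun_prop
  rw [DiffContOnCl.circleAverage (by simpa [abs_of_pos hR] using hd.diffContOnCl_ball subset_rfl)]
  simp [hn]

theorem circleAverage_inv_sub_center_pow_mul_two_re (hR : 0 < R)
    (hf : DifferentiableOn ℂ f (closedBall c R)) {n : ℕ} (hn : n ≠ 0) :
    circleAverage (fun z ↦ (z - c)⁻¹ ^ n * ((2 * (f z).re : ℝ) : ℂ)) c R =
      iteratedDeriv n f c / n ! := by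
  have hsphere : ∀ z ∈ sphere c |R|, (z - c)⁻¹ ^ n * ((2 * (f z).re : ℝ) : ℂ) =
      (z - c)⁻¹ ^ n * f z + ((R ^ (2 * n))⁻¹ : ℝ) • conj ((z - c) ^ n * f z) := by
    intro z hz
    rw [abs_of_pos hR] at hz
    have hzc : z - c ≠ 0 := sub_ne_zero.2 (ne_of_mem_sphere hz hR.ne')
    have hconj : conj (z - c) = R ^ 2 / (z - c) := by
      rw [eq_div_iff hzc, mul_comm, mul_conj', ← Complex.dist_eq, mem_sphere.1 hz]
    have hR' : (R : ℂ) ≠ 0 := by exact_mod_cast hR.ne'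
    rw [← add_conj, map_mul, map_pow, hconj, Complex.real_smul]
    push_cast
    field_simp
    ring
  have hcont : ContinuousOn (fun z ↦ (z - c)⁻¹ ^ n * f z) (sphere c R) :=
    (((continuousOn_id.sub continuousOn_const).inv₀ fun z hz ↦
      sub_ne_zero.2 (ne_of_mem_sphere hz hR.ne')).pow n).mul
      (hf.continuousOn.mono sphere_subset_closedBall)
  have hcont_pow : ContinuousOn (fun z ↦ (z - c) ^ n * f z) (sphere c R) := by
    have : DifferentiableOn ℂ (fun z ↦ (z - c) ^ n * f z) (closedBall c R) := by fun_prop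
    exact this.continuousOn.mono sphere_subset_closedBall
  have hconj : circleAverage (fun z ↦ conj ((z - c) ^ n * f z)) c R = 0 := by
    have := (conjCLE : ℂ →L[ℝ] ℂ).circleAverage_comp_comm (hcont_pow.circleIntegrable hR.le)
    rw [circleAverage_sub_center_pow_mul_eq_zero hR hf hn, map_zero] at this
    exact this
  have hint : CircleIntegrable (fun z ↦ (R ^ (2 * n))⁻¹ • conj ((z - c) ^ n * f z)) c R :=
    ContinuousOn.circleIntegrable hR.le <| by fun_prop
  rw [circleAverage_congr_sphere hsphere, circleAverage_fun_add (hcont.circleIntegrable hR.le) hint,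
    circleAverage_fun_smul, circleAverage_inv_sub_center_pow_mul hR hf, hconj, smul_zero,
    add_zero]

theorem norm_iteratedDeriv_div_factorial_mul_pow_le_two_mul_re (hR : 0 < R)
    (hf : DifferentiableOn ℂ f (closedBall c R)) (hre : ∀ z ∈ sphere c R, 0 ≤ (f z).re)
    {n : ℕ} (hn : n ≠ 0) :
    ‖iteratedDeriv n f c / (n !)‖ * R ^ n ≤ 2 * (f c).re := by
  have hnorm : ∀ z ∈ sphere c |R|,
      ‖(z - c)⁻¹ ^ n * ((2 * (f z).re : ℝ) : ℂ)‖ = ((R ^ n)⁻¹ * 2) • (f z).re := by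
    intro z hz
    rw [abs_of_pos hR] at hz
    rw [norm_mul, norm_pow, norm_inv, ← Complex.dist_eq, mem_sphere.1 hz, Complex.norm_real,
      Real.norm_of_nonneg (by linarith [hre z hz]), smul_eq_mul]
    ring
  calc ‖iteratedDeriv n f c / (n !)‖ * R ^ n
      = ‖circleAverage (fun z ↦ (z - c)⁻¹ ^ n * ((2 * (f z).re : ℝ) : ℂ)) c R‖ * R ^ n := by
        rw [circleAverage_inv_sub_center_pow_mul_two_re hR hf hn]
    _ ≤ circleAverage (fun z ↦ ‖(z - c)⁻¹ ^ n * ((2 * (f z).re : ℝ) : ℂ)‖) c R * R ^ n := by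
        gcongr
        exact norm_circleAverage_le_circleAverage_norm
    _ = 2 * (f c).re := by
        rw [circleAverage_congr_sphere hnorm, circleAverage_fun_smul, circleAverage_re hR hf,
          smul_eq_mul]
        field_simp

theorem norm_iteratedDeriv_div_factorial_mul_pow_le_of_forall_le_re (hR : 0 < R)
    (hf : DifferentiableOn ℂ f (ball c R)) {β : ℝ} (hre : ∀ z ∈ ball c R, β ≤ (f z).re)
    {n : ℕ} (hn : n ≠ 0) :
    ‖iteratedDeriv n f c / (n !)‖ * R ^ n ≤ 2 * ((f c).re - β) := by
  have hr : ∀ r ∈ Set.Ioo 0 R, ‖iteratedDeriv n f c / (n !)‖ * r ^ n ≤ 2 * ((f c).re - β) := by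
    rintro r ⟨hr0, hrR⟩
    have hsub := closedBall_subset_ball (x := c) hrR
    have := norm_iteratedDeriv_div_factorial_mul_pow_le_two_mul_re hr0
      ((hf.mono hsub).const_add (-β : ℂ)) (fun z hz ↦ by simpa using hre z (hsub (sphere_subset_closedBall hz))) hn
    rwa [iteratedDeriv_const_add (Nat.pos_of_ne_zero hn), add_re, neg_re, ofReal_re,
      neg_add_eq_sub] at this
  have hlim : Filter.Tendsto (fun r ↦ ‖iteratedDeriv n f c / (n !)‖ * r ^ n) (𝓝[<] R)
      (𝓝 (‖iteratedDeriv n f c / (n !)‖ * R ^ n)) :=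
    (Continuous.tendsto (by fun_prop) R).mono_left nhdsWithin_le_nhds
  exact le_of_tendsto hlim (Filter.mem_of_superset (Ioo_mem_nhdsLT hR) hr)

end Caratheodory

theorem stmt_14_general (α : ℝ) (hα1 : α < 1)
    (g : ℂ → ℂ) (hg : DifferentiableOn ℂ g (ball (0:ℂ) 1))
    (h0 : g 0 = 0) (h1 : deriv g 0 = 1)
    (hre : ∀ z ∈ ball (0:ℂ) 1, z ≠ 0 → α ≤ (g z / z).re)
    (c : ℕ → ℂ) (hc : ∀ n, c n = iteratedDeriv n g 0 / (Nat.factorial n)) :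
    ∀ m : ℕ, 2 ≤ m → ‖c m‖ ≤ 2 * (1 - α) := by
  intro m hm
  obtain ⟨n, rfl⟩ : ∃ n, m = n + 1 := ⟨m - 1, by omega⟩
  have hball : ball (0 : ℂ) 1 ∈ 𝓝 0 := ball_mem_nhds 0 one_pos
  have hslope : DifferentiableOn ℂ (dslope g 0) (ball 0 1) := (differentiableOn_dslope hball).2 hg
  have hre_slope : ∀ z ∈ ball (0 : ℂ) 1, α ≤ (dslope g 0 z).re := by
    intro z hz
    rcases eq_or_ne z 0 with rfl | hz0
    · simpa [dslope_same, h1] using hα1.le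
    · simpa [dslope_of_ne _ hz0, slope_def_field, h0] using hre z hz hz0
  rw [hc, ← (hg.analyticAt hball).iteratedDeriv_dslope_div_factorial]
  simpa [dslope_same, h1] using
    norm_iteratedDeriv_div_factorial_mul_pow_le_of_forall_le_re one_pos hslope hre_slope
      (n := n) (by omega)

theorem stmt_14 (α : ℝ) (hα0 : 0 ≤ α) (hα1 : α < 1)
    (g : ℂ → ℂ) (hg : DifferentiableOn ℂ g (ball (0:ℂ) 1))
    (h0 : g 0 = 0) (h1 : deriv g 0 = 1)
    (hre : ∀ z ∈ ball (0:ℂ) 1, z ≠ 0 → α ≤ (g z / z).re)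
    (c : ℕ → ℂ) (hc : ∀ n, c n = iteratedDeriv n g 0 / (Nat.factorial n)) :
    ∀ m : ℕ, 2 ≤ m → ‖c m‖ ≤ 2 * (1 - α) :=
  stmt_14_general α hα1 g hg h0 h1 hre c hc
end

section
/- Let h : D → ℂ be holomorphic with h(0) = 0 and h(D) ⊆ D (a Schwarz function), with Taylor expansion h(z) = c_1 z + c_2 z² + c_3 z³ + ⋯. Then |c_2| ≤ 1 - |c_1|² and |c_3| ≤ 1 - |c_1|². -/
open Complex Metric Set Filter Topology
open scoped ComplexConjugate Nat

/-!
Write `h z = z * g z` with `g = dslope h 0`, a holomorphic map of the disc into the closed disc,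
so that `c₁, c₂, c₃` are `g 0`, `g' 0` and `g'' 0 / 2`. If `a := g 0` lies in the open disc,
Schwarz's lemma for the Möbius transform `(g - a) / (1 - conj a * g)` gives
`g - a = z * ψ * (1 - conj a * g)` with `ψ` again mapping the disc into the closed disc.
Comparing coefficients, `g' 0 = (1 - ‖a‖²) ψ 0` and
`g'' 0 / 2 = (1 - ‖a‖²) (ψ' 0 - conj a * (ψ 0)²)`; the first identity bounds `g' 0`, and
applied to `ψ` it gives `‖ψ' 0‖ ≤ 1 - ‖ψ 0‖²`, which bounds `g'' 0 / 2`.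
If `‖a‖ = 1`, then `g` is constant by the maximum modulus principle.
-/

theorem iteratedDeriv_succ_of_eventuallyEq_const_add_mul {𝕜 : Type*} [NontriviallyNormedField 𝕜]
    {f F : 𝕜 → 𝕜} {a : 𝕜} {n : ℕ} (hF : ContDiffAt 𝕜 (n + 1) F 0)
    (hf : f =ᶠ[𝓝 0] fun z => a + z * F z) :
    iteratedDeriv (n + 1) f 0 = (n + 1) * iteratedDeriv n F 0 := by
  rw [hf.iteratedDeriv_eq, iteratedDeriv_const_add n.add_one_pos,
    iteratedDeriv_fun_mul (f := fun z => z) contDiffAt_id hF, Finset.sum_eq_single 1]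
  · simp
  · intro i _ hi
    simp [iteratedDeriv_fun_id_zero, hi]
  · simp

noncomputable def mobius (a z : ℂ) : ℂ := (z - a) / (1 - conj a * z)

section Mobius

variable {a z : ℂ}

theorem one_sub_conj_mul_ne_zero_s18 (ha : ‖a‖ < 1) (hz : ‖z‖ < 1) : 1 - conj a * z ≠ 0 := by
  refine sub_ne_zero.2 fun h => ?_
  have : ‖conj a * z‖ < 1 := by
    rw [norm_mul, norm_conj]
    nlinarith [norm_nonneg a, norm_nonneg z]
  simp [← h] at this

theorem normSq_one_sub_conj_mul_sub_normSq_sub (a z : ℂ) :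
    normSq (1 - conj a * z) - normSq (z - a) = (1 - normSq a) * (1 - normSq z) := by
  simp only [normSq_apply, sub_re, sub_im, mul_re, mul_im, conj_re, conj_im, one_re, one_im]
  ring

theorem norm_mobius_lt_one (ha : ‖a‖ < 1) (hz : ‖z‖ < 1) : ‖mobius a z‖ < 1 := by
  have hden := norm_pos_iff.2 (one_sub_conj_mul_ne_zero_s18 ha hz)
  rw [mobius, norm_div, div_lt_one hden, ← sq_lt_sq₀ (norm_nonneg _) hden.le,
    ← normSq_eq_norm_sq, ← normSq_eq_norm_sq, ← sub_pos,
    normSq_one_sub_conj_mul_sub_normSq_sub, normSq_eq_norm_sq, normSq_eq_norm_sq]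
  exact mul_pos (by nlinarith [norm_nonneg a]) (by nlinarith [norm_nonneg z])

@[simp]
theorem mobius_self (a : ℂ) : mobius a a = 0 := by
  simp [mobius]

theorem sub_eq_mobius_mul (ha : ‖a‖ < 1) (hz : ‖z‖ < 1) :
    z - a = mobius a z * (1 - conj a * z) :=
  (div_mul_cancel₀ _ (one_sub_conj_mul_ne_zero_s18 ha hz)).symm

theorem norm_one_sub_conj_mul_self (ha : ‖a‖ ≤ 1) : ‖1 - conj a * a‖ = 1 - ‖a‖ ^ 2 := by
  rw [conj_mul', ← ofReal_pow, ← ofReal_one, ← ofReal_sub, norm_real, Real.norm_of_nonneg]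
  nlinarith [norm_nonneg a]

end Mobius

section UnitDisc

variable {g : ℂ → ℂ}

theorem mapsTo_ball_of_norm_apply_zero_lt_one (hg : DifferentiableOn ℂ g (ball 0 1))
    (hmaps : MapsTo g (ball 0 1) (closedBall 0 1)) (h0 : ‖g 0‖ < 1) :
    MapsTo g (ball 0 1) (ball 0 1) := by
  intro z hz
  rw [mem_ball_zero_iff]
  refine (mem_closedBall_zero_iff.1 (hmaps hz)).lt_of_ne fun hz1 => h0.ne ?_
  have hmax : IsMaxOn (norm ∘ g) (ball 0 1) z := fun w hw => by
    simpa [hz1] using mem_closedBall_zero_iff.1 (hmaps hw)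
  rw [eq_const_of_exists_max hg hz hmax (mem_ball_self one_pos), Function.const_apply, hz1]

theorem iteratedDeriv_eq_zero_of_norm_apply_zero_eq_one (hg : DifferentiableOn ℂ g (ball 0 1))
    (hmaps : MapsTo g (ball 0 1) (closedBall 0 1)) (h0 : ‖g 0‖ = 1) {n : ℕ} (hn : 0 < n) :
    iteratedDeriv n g 0 = 0 := by
  have hball : ball (0 : ℂ) 1 ∈ 𝓝 0 := isOpen_ball.mem_nhds (mem_ball_self one_pos)
  have hmax : IsLocalMax (norm ∘ g) 0 := Filter.mem_of_superset hball fun w hw => by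
    simpa [h0] using mem_closedBall_zero_iff.1 (hmaps hw)
  have hconst : g =ᶠ[𝓝 0] fun _ => g 0 :=
    eventually_eq_of_isLocalMax_norm (Filter.mem_of_superset hball fun _ hw =>
      hg.differentiableAt (isOpen_ball.mem_nhds hw)) hmax
  rw [hconst.iteratedDeriv_eq, iteratedDeriv_const, if_neg hn.ne']

theorem exists_eq_add_mul_one_sub_conj_mul (hg : DifferentiableOn ℂ g (ball 0 1))
    (hmaps : MapsTo g (ball 0 1) (ball 0 1)) :
    ∃ ψ : ℂ → ℂ, DifferentiableOn ℂ ψ (ball 0 1) ∧ MapsTo ψ (ball 0 1) (closedBall 0 1) ∧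
      ∀ z ∈ ball (0 : ℂ) 1, g z = g 0 + z * (ψ z * (1 - conj (g 0) * g z)) := by
  have h0 : ‖g 0‖ < 1 := mem_ball_zero_iff.1 (hmaps (mem_ball_self one_pos))
  set f := fun z => mobius (g 0) (g z)
  have hf : DifferentiableOn ℂ f (ball 0 1) :=
    (hg.sub_const _).div ((hg.const_mul _).const_sub _) fun z hz =>
      one_sub_conj_mul_ne_zero_s18 h0 (mem_ball_zero_iff.1 (hmaps hz))
  have hfmaps : MapsTo f (ball 0 1) (closedBall (f 0) 1) := fun z hz => by
    simpa [f] using (norm_mobius_lt_one h0 (mem_ball_zero_iff.1 (hmaps hz))).le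
  refine ⟨dslope f 0, ?_, fun z hz => ?_, fun z hz => ?_⟩
  · exact (differentiableOn_dslope (isOpen_ball.mem_nhds (mem_ball_self one_pos))).2 hf
  · simpa using norm_dslope_le_div_of_mapsTo_ball hf hfmaps hz
  · have hslope : z * dslope f 0 z = f z := by simpa [f] using sub_smul_dslope f 0 z
    rw [← mul_assoc, hslope, ← sub_eq_mobius_mul h0 (mem_ball_zero_iff.1 (hmaps hz)),
      add_sub_cancel]

end UnitDisc

section Coefficients

variable {g ψ : ℂ → ℂ}

theorem deriv_eq_of_eq_add_mul (hg : DifferentiableOn ℂ g (ball 0 1))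
    (hψ : DifferentiableOn ℂ ψ (ball 0 1))
    (hgψ : ∀ z ∈ ball (0 : ℂ) 1, g z = g 0 + z * (ψ z * (1 - conj (g 0) * g z))) :
    deriv g 0 = ψ 0 * (1 - conj (g 0) * g 0) := by
  have hball : ball (0 : ℂ) 1 ∈ 𝓝 0 := isOpen_ball.mem_nhds (mem_ball_self one_pos)
  have hF : DifferentiableOn ℂ (fun z => ψ z * (1 - conj (g 0) * g z)) (ball 0 1) :=
    hψ.mul ((hg.const_mul _).const_sub 1)
  simpa using iteratedDeriv_succ_of_eventuallyEq_const_add_mul (n := 0)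
    (hF.analyticAt hball).contDiffAt (Filter.mem_of_superset hball hgψ)

theorem iteratedDeriv_two_eq_of_eq_add_mul (hg : DifferentiableOn ℂ g (ball 0 1))
    (hψ : DifferentiableOn ℂ ψ (ball 0 1))
    (hgψ : ∀ z ∈ ball (0 : ℂ) 1, g z = g 0 + z * (ψ z * (1 - conj (g 0) * g z))) :
    iteratedDeriv 2 g 0 / 2 = (deriv ψ 0 - conj (g 0) * ψ 0 ^ 2) * (1 - conj (g 0) * g 0) := by
  have hball : ball (0 : ℂ) 1 ∈ 𝓝 0 := isOpen_ball.mem_nhds (mem_ball_self one_pos)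
  have hF : DifferentiableOn ℂ (fun z => ψ z * (1 - conj (g 0) * g z)) (ball 0 1) :=
    hψ.mul ((hg.const_mul _).const_sub 1)
  have hderivF : HasDerivAt (fun z => ψ z * (1 - conj (g 0) * g z))
      (deriv ψ 0 * (1 - conj (g 0) * g 0) + ψ 0 * -(conj (g 0) * deriv g 0)) 0 :=
    (hψ.differentiableAt hball).hasDerivAt.mul
      (((hg.differentiableAt hball).hasDerivAt.const_mul _).const_sub 1)
  rw [iteratedDeriv_succ_of_eventuallyEq_const_add_mul (n := 1)
    (hF.analyticAt hball).contDiffAt (Filter.mem_of_superset hball hgψ),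
    iteratedDeriv_one, hderivF.deriv, deriv_eq_of_eq_add_mul hg hψ hgψ]
  ring

end Coefficients

section Wiener

variable {g : ℂ → ℂ}

theorem norm_deriv_le_one_sub_sq (hg : DifferentiableOn ℂ g (ball 0 1))
    (hmaps : MapsTo g (ball 0 1) (closedBall 0 1)) : ‖deriv g 0‖ ≤ 1 - ‖g 0‖ ^ 2 := by
  rcases (mem_closedBall_zero_iff.1 (hmaps (mem_ball_self one_pos))).lt_or_eq with h0 | h0
  · obtain ⟨ψ, hψ, hψmaps, hgψ⟩ := exists_eq_add_mul_one_sub_conj_mul hg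
      (mapsTo_ball_of_norm_apply_zero_lt_one hg hmaps h0)
    rw [deriv_eq_of_eq_add_mul hg hψ hgψ, norm_mul, norm_one_sub_conj_mul_self h0.le]
    exact mul_le_of_le_one_left (by nlinarith [norm_nonneg (g 0)])
      (mem_closedBall_zero_iff.1 (hψmaps (mem_ball_self one_pos)))
  · rw [← iteratedDeriv_one, iteratedDeriv_eq_zero_of_norm_apply_zero_eq_one hg hmaps h0 one_pos,
      h0]
    norm_num

theorem norm_iteratedDeriv_two_div_two_le_one_sub_sq (hg : DifferentiableOn ℂ g (ball 0 1))
    (hmaps : MapsTo g (ball 0 1) (closedBall 0 1)) :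
    ‖iteratedDeriv 2 g 0 / 2‖ ≤ 1 - ‖g 0‖ ^ 2 := by
  rcases (mem_closedBall_zero_iff.1 (hmaps (mem_ball_self one_pos))).lt_or_eq with h0 | h0
  · obtain ⟨ψ, hψ, hψmaps, hgψ⟩ := exists_eq_add_mul_one_sub_conj_mul hg
      (mapsTo_ball_of_norm_apply_zero_lt_one hg hmaps h0)
    have hψ0 : ‖ψ 0‖ ≤ 1 := mem_closedBall_zero_iff.1 (hψmaps (mem_ball_self one_pos))
    have hψ' : ‖deriv ψ 0‖ ≤ 1 - ‖ψ 0‖ ^ 2 := norm_deriv_le_one_sub_sq hψ hψmaps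
    have hbound : ‖deriv ψ 0 - conj (g 0) * ψ 0 ^ 2‖ ≤ 1 :=
      calc ‖deriv ψ 0 - conj (g 0) * ψ 0 ^ 2‖ ≤ ‖deriv ψ 0‖ + ‖g 0‖ * ‖ψ 0‖ ^ 2 :=
            (norm_sub_le _ _).trans_eq (by rw [norm_mul, norm_pow, norm_conj])
        _ ≤ 1 := by nlinarith [norm_nonneg (ψ 0)]
    rw [iteratedDeriv_two_eq_of_eq_add_mul hg hψ hgψ, norm_mul, norm_one_sub_conj_mul_self h0.le]
    exact mul_le_of_le_one_left (by nlinarith [norm_nonneg (g 0)]) hbound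
  · rw [iteratedDeriv_eq_zero_of_norm_apply_zero_eq_one hg hmaps h0 two_pos, h0]
    norm_num

end Wiener

theorem stmt_18 (h : ℂ → ℂ) (hh : DifferentiableOn ℂ h (ball (0:ℂ) 1))
    (h0 : h 0 = 0)
    (hmap : ∀ z ∈ ball (0:ℂ) 1, ‖h z‖ < 1)
    (c : ℕ → ℂ) (hc : ∀ n, c n = iteratedDeriv n h 0 / (Nat.factorial n)) :
    ‖c 2‖ ≤ 1 - (‖c 1‖) ^ 2 ∧
      ‖c 3‖ ≤ 1 - (‖c 1‖) ^ 2 := by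
  set g := dslope h 0
  have hball : ball (0 : ℂ) 1 ∈ 𝓝 0 := isOpen_ball.mem_nhds (mem_ball_self one_pos)
  have hg : DifferentiableOn ℂ g (ball 0 1) := (differentiableOn_dslope hball).2 hh
  have hgmaps : MapsTo g (ball 0 1) (closedBall 0 1) := fun z hz => by
    have hmaps : MapsTo h (ball 0 1) (closedBall (h 0) 1) := fun w hw => by
      simpa [h0] using (hmap w hw).le
    simpa using norm_dslope_le_div_of_mapsTo_ball hh hmaps hz
  have hcg : ∀ n, c (n + 1) = iteratedDeriv n g 0 / n ! := fun n => by
    have hhg : h =ᶠ[𝓝 0] fun z => 0 + z * g z := Eventually.of_forall fun z => by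
      simpa [h0] using (sub_smul_dslope h 0 z).symm
    rw [hc, iteratedDeriv_succ_of_eventuallyEq_const_add_mul (hg.analyticAt hball).contDiffAt hhg,
      Nat.factorial_succ]
    push_cast
    field_simp
  have hc1 : c 1 = g 0 := by simpa using hcg 0
  have hc2 : c 2 = deriv g 0 := by simpa using hcg 1
  have hc3 : c 3 = iteratedDeriv 2 g 0 / 2 := by simpa using hcg 2
  rw [hc1, hc2, hc3]
  exact ⟨norm_deriv_le_one_sub_sq hg hgmaps,
    norm_iteratedDeriv_two_div_two_le_one_sub_sq hg hgmaps⟩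
end
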